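/- Let $I$ be a square-free monomial ideal of $R = k[x_1,\ldots,x_n]$ over a field $k$ with minimal primes $P_1, \ldots, P_r$ (which are monomial primes, and $I = P_1 \cap \cdots \cap P_r$). Then for each $m \in \mathbb{N}$, $I^m$ is not $(mr - 1)$-absorbing; hence $\omega(I^m) \ge m\,\omega(I) = mr$. -/

import Mathlib

/-! Put `fᵢ = ∑_{t ∈ Vᵢ} xₜ ∈ Pᵢ`. The product of `m` copies of every `fᵢ` has `mr` factors and
lies in `I^m`; leaving out one copy of `fᵢ` leaves `fᵢ^(m-1) ∏_{j ≠ i} fⱼ^m`, which is not even in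
`Pᵢ^m`. Indeed, substituting `xₜ ↦ xₜ T` for `t ∈ Vᵢ` sends `Pᵢ^m` into `(T^m)`, whereas the
coefficient of `T^(m-1)` in the image of that element is
`fᵢ^(m-1) ∏_{j ≠ i} (∑_{t ∈ Vⱼ \ Vᵢ} xₜ)^m`, which is nonzero because no `Vⱼ` is contained in `Vᵢ`.

For the bound on `ω`, an `N`-absorbing ideal is `(N+1)`-absorbing, and by primary decomposition
every ideal of a Noetherian ring is `N`-absorbing for some `N`. -/

open Ideal Finset MvPolynomial

/-- `I` is an `N`-absorbing ideal: whenever a product of `N+1` elements lies in `I`,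
the product of some `N` of them (omitting one factor) lies in `I`. -/
def IsNAbsorbing {R : Type*} [CommRing R] (I : Ideal R) (N : ℕ) : Prop :=
  ∀ x : Fin (N + 1) → R, (∏ i, x i) ∈ I →
    ∃ j, (∏ i ∈ Finset.univ.erase j, x i) ∈ I

/-- `ω(I)`: the least `N` such that `I` is `N`-absorbing. -/
noncomputable def omegaAbs {R : Type*} [CommRing R] (I : Ideal R) : ℕ :=
  sInf {N | IsNAbsorbing I N}

theorem prod_univ_erase_eq_prod_succAbove {M : Type*} [CommMonoid M] {n : ℕ}
    (f : Fin (n + 1) → M) (j : Fin (n + 1)) :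
    ∏ i ∈ univ.erase j, f i = ∏ i, f (j.succAbove i) := by
  rw [Fin.univ_succAbove n j, Finset.erase_cons, Finset.prod_map]
  rfl

namespace IsNAbsorbing

variable {R : Type*} [CommRing R] {I : Ideal R} {N M : ℕ}

theorem succ (h : IsNAbsorbing I N) : IsNAbsorbing I (N + 1) := by
  intro x hx
  obtain ⟨j, hj⟩ := h (Fin.cons (x 0 * x 1) fun i => x i.succ.succ)
    (by simpa [Fin.prod_univ_succ, mul_assoc] using hx)
  simp only [prod_univ_erase_eq_prod_succAbove] at hj ⊢
  cases j using Fin.cases with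
  | zero => exact ⟨0, by simpa [Fin.prod_univ_succ] using I.mul_mem_left (x 1) hj⟩
  | succ j =>
    obtain ⟨N, rfl⟩ := Nat.exists_eq_add_one_of_ne_zero j.pos.ne'
    exact ⟨j.succ.succ, by simpa [Fin.prod_univ_succ, mul_assoc] using hj⟩

theorem mono (h : IsNAbsorbing I N) (hNM : N ≤ M) : IsNAbsorbing I M := by
  induction hNM with
  | refl => exact h
  | step _ ih => exact ih.succ

end IsNAbsorbing

theorem Ideal.IsPrimary.exists_card_le_prod_mem {R : Type*} [CommRing R] {Q : Ideal R}
    (hQ : Q.IsPrimary) {s : ℕ} (hs : Q.radical ^ s ≤ Q) {ι : Type*} [Fintype ι] (x : ι → R)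
    (hx : ∏ i, x i ∈ Q) : ∃ T : Finset ι, T.card ≤ s ∧ ∏ i ∈ T, x i ∈ Q := by
  classical
  set A := univ.filter fun i => x i ∈ Q.radical
  by_cases hA : s ≤ A.card
  · obtain ⟨T, hTA, rfl⟩ := exists_subset_card_eq hA
    refine ⟨T, le_rfl, hs ?_⟩
    rw [← prod_const]
    exact Ideal.prod_mem_prod fun i hi => (mem_filter.mp (hTA hi)).2
  · refine ⟨A, by omega, ?_⟩
    rw [← prod_filter_mul_prod_filter_not univ (fun i => x i ∈ Q.radical)] at hx
    refine ((isPrimary_iff.mp hQ).2 hx).resolve_right fun h => ?_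
    obtain ⟨i, hi, hxi⟩ := ((isPrime_radical hQ).prod_mem_iff).mp h
    exact (mem_filter.mp hi).2 hxi

theorem exists_isNAbsorbing {R : Type*} [CommRing R] [IsNoetherianRing R] (I : Ideal R) :
    ∃ N, IsNAbsorbing I N := by
  classical
  obtain ⟨s, rfl, hprim⟩ := Submodule.isLasker R R I
  choose e he using fun Q : s =>
    Ideal.exists_radical_pow_le_of_fg (Q : Ideal R) (IsNoetherian.noetherian _)
  refine ⟨∑ Q, e Q, fun x hx => ?_⟩
  choose T hTcard hT using fun Q : s =>
    Ideal.IsPrimary.exists_card_le_prod_mem (hprim Q.2) (he Q) x (Finset.inf_le (f := id) Q.2 hx)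
  obtain ⟨j, hj⟩ : ∃ j, j ∉ univ.biUnion T := by
    by_contra! h
    have := (card_le_card (s := univ) fun j _ => h j).trans
      (card_biUnion_le.trans (sum_le_sum fun Q _ => hTcard Q))
    rw [card_univ, Fintype.card_fin] at this
    exact Nat.not_succ_le_self _ this
  refine ⟨j, Submodule.mem_finsetInf.mpr fun Q hQ => ?_⟩
  have hsub : T ⟨Q, hQ⟩ ⊆ univ.erase j := fun i hi =>
    mem_erase.mpr ⟨by rintro rfl; exact hj (mem_biUnion.mpr ⟨_, mem_univ _, hi⟩), mem_univ i⟩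
  rw [← prod_sdiff hsub]
  exact Ideal.mul_mem_left _ _ (hT ⟨Q, hQ⟩)

theorem le_omegaAbs_of_not_isNAbsorbing {R : Type*} [CommRing R] [IsNoetherianRing R]
    {I : Ideal R} {N : ℕ} (h : ¬ IsNAbsorbing I N) : N + 1 ≤ omegaAbs I := by
  obtain ⟨N₀, hN₀⟩ := exists_isNAbsorbing I
  by_contra! hlt
  have hω : omegaAbs I ∈ {N | IsNAbsorbing I N} := Nat.sInf_mem ⟨N₀, hN₀⟩
  exact h (IsNAbsorbing.mono hω (by omega))

theorem not_isNAbsorbing_iInf_pow {R : Type*} [CommRing R] [IsDomain R] {ι : Type*} [Fintype ι]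
    [DecidableEq ι] [Nonempty ι] (P : ι → Ideal R) (f : ι → R) (hfP : ∀ i, f i ∈ P i)
    (hf0 : ∀ i, f i ≠ 0) (m : ℕ)
    (hP : ∀ i, f i ^ m * ∏ j ∈ univ.erase i, f j ^ (m + 1) ∉ P i ^ (m + 1)) :
    ¬ IsNAbsorbing ((⨅ i, P i) ^ (m + 1)) ((m + 1) * Fintype.card ι - 1) := by
  intro habs
  have hcard : Fintype.card (Fin ((m + 1) * Fintype.card ι - 1 + 1)) =
      Fintype.card (Fin (m + 1) × ι) := by
    have := Fintype.card_pos (α := ι)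
    simp only [Fintype.card_fin, Fintype.card_prod]
    exact Nat.sub_add_cancel (Nat.mul_pos m.succ_pos this)
  set e := Fintype.equivOfCardEq hcard
  have hfI : ∏ i, f i ∈ ⨅ i, P i := Submodule.mem_iInf _ |>.mpr fun i =>
    (P i).mem_of_dvd (dvd_prod_of_mem f (mem_univ i)) (hfP i)
  have hprod : ∏ a, f (e a).2 = (∏ i, f i) ^ (m + 1) := by
    rw [e.prod_comp (fun p => f p.2), Fintype.prod_prod_type]
    simp
  obtain ⟨a, ha⟩ := habs _ (hprod ▸ Ideal.pow_mem_pow hfI (m + 1))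
  set i := (e a).2
  have hsplit : f i * ∏ b ∈ univ.erase a, f (e b).2 =
      f i * (f i ^ m * ∏ j ∈ univ.erase i, f j ^ (m + 1)) := by
    rw [mul_prod_erase univ (fun b => f (e b).2) (mem_univ a), hprod, ← prod_pow,
      ← mul_prod_erase univ _ (mem_univ i), pow_succ', mul_assoc]
  rw [mul_left_cancel₀ (hf0 i) hsplit] at ha
  exact hP i (Ideal.pow_right_mono (iInf_le P i) _ ha)

namespace MvPolynomial

variable {σ R : Type*} [CommRing R] [DecidableEq σ]

/-- `gradeByVars V p = ∑_d p_d T^d`, where `p_d` is the part of `p` of degree `d` in the variables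
of `V`. -/
noncomputable def gradeByVars (V : Finset σ) :
    MvPolynomial σ R →ₐ[R] Polynomial (MvPolynomial σ R) :=
  aeval fun t => if t ∈ V then Polynomial.C (X t) * Polynomial.X else Polynomial.C (X t)

theorem map_gradeByVars_span_X_le (V : Finset σ) :
    Ideal.map (gradeByVars V) (span ((X : σ → MvPolynomial σ R) '' V)) ≤
      span {Polynomial.X} := by
  rw [Ideal.map_span, Ideal.span_le]
  rintro _ ⟨_, ⟨t, ht, rfl⟩, rfl⟩
  simp [gradeByVars, Finset.mem_coe.mp ht, Ideal.mem_span_singleton]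

theorem coeff_gradeByVars_eq_zero_of_mem_pow {V : Finset σ} {m d : ℕ}
    {p : MvPolynomial σ R} (hp : p ∈ span ((X : σ → MvPolynomial σ R) '' V) ^ m) (hd : d < m) :
    (gradeByVars V p).coeff d = 0 := by
  have h : gradeByVars V p ∈ span {Polynomial.X} ^ m := by
    have hmap := Ideal.mem_map_of_mem (gradeByVars V) hp
    rw [Ideal.map_pow] at hmap
    exact Ideal.pow_right_mono (map_gradeByVars_span_X_le V) m hmap
  rw [Ideal.span_singleton_pow, Ideal.mem_span_singleton, Polynomial.X_pow_dvd_iff] at h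
  exact h d hd

theorem gradeByVars_sum_X_of_subset {V S : Finset σ} (hS : S ⊆ V) :
    gradeByVars V (∑ t ∈ S, X t : MvPolynomial σ R) =
      Polynomial.C (∑ t ∈ S, X t) * Polynomial.X := by
  simp only [map_sum, gradeByVars, aeval_X, Finset.sum_mul, map_sum]
  exact Finset.sum_congr rfl fun t ht => if_pos (hS ht)

theorem coeff_zero_gradeByVars_sum_X (V S : Finset σ) :
    (gradeByVars V (∑ t ∈ S, X t : MvPolynomial σ R)).coeff 0 = ∑ t ∈ S \ V, X t := by
  rw [sdiff_eq_filter, sum_filter, map_sum, Polynomial.finsetSum_coeff]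
  refine sum_congr rfl fun t _ => ?_
  by_cases ht : t ∈ V <;> simp [gradeByVars, ht]

theorem sum_X_ne_zero [Nontrivial R] {S : Finset σ} (hS : S.Nonempty) :
    (∑ t ∈ S, X t : MvPolynomial σ R) ≠ 0 := by
  obtain ⟨t₀, ht₀⟩ := hS
  intro h
  simpa [Pi.single_apply, ht₀] using congrArg (eval (Pi.single t₀ 1)) h

theorem sum_X_pow_mul_prod_notMem_span_X_pow [IsDomain R] {ι : Type*} [Fintype ι]
    [DecidableEq ι] (V : ι → Finset σ) (hV : ∀ i, (V i).Nonempty) (i : ι)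
    (hVi : ∀ j ≠ i, ¬ V j ⊆ V i) (m : ℕ) :
    (∑ t ∈ V i, X t) ^ m * ∏ j ∈ univ.erase i, (∑ t ∈ V j, X t) ^ (m + 1) ∉
      span ((X : σ → MvPolynomial σ R) '' V i) ^ (m + 1) := by
  intro h
  have hcoeff := coeff_gradeByVars_eq_zero_of_mem_pow h m.lt_succ_self
  rw [map_mul, map_pow, gradeByVars_sum_X_of_subset subset_rfl, mul_pow, mul_comm, ← mul_assoc,
    Polynomial.coeff_mul_X_pow', if_pos le_rfl, Nat.sub_self,
    ← Polynomial.constantCoeff_apply, map_mul, map_pow, map_prod, map_prod] at hcoeff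
  simp only [map_pow, Polynomial.constantCoeff_apply, coeff_zero_gradeByVars_sum_X,
    Polynomial.coeff_C_zero] at hcoeff
  refine mul_ne_zero ?_ (pow_ne_zero _ (sum_X_ne_zero (hV i))) hcoeff
  refine prod_ne_zero_iff.mpr fun j hj => pow_ne_zero _ (sum_X_ne_zero ?_)
  exact sdiff_nonempty.mpr (hVi j (ne_of_mem_erase hj))

end MvPolynomial

theorem squarefree_monomial_omega_pow_ge {k : Type*} [Field k] (n r : ℕ) (hr : 0 < r)
    (V : Fin r → Finset (Fin n)) (hV : ∀ i, (V i).Nonempty)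
    (hinc : ∀ i j, i ≠ j →
      ¬ Ideal.span ((fun t => (X t : MvPolynomial (Fin n) k)) '' ↑(V i)) ≤
        Ideal.span ((fun t => (X t : MvPolynomial (Fin n) k)) '' ↑(V j)))
    (I : Ideal (MvPolynomial (Fin n) k))
    (hI : I = ⨅ i, Ideal.span ((fun t => (X t : MvPolynomial (Fin n) k)) '' ↑(V i))) :
    ∀ m : ℕ, 1 ≤ m → ¬ IsNAbsorbing (I ^ m) (m * r - 1) ∧ m * r ≤ omegaAbs (I ^ m) := by
  intro m hm
  obtain ⟨m, rfl⟩ := Nat.exists_eq_add_of_le' hm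
  have : Nonempty (Fin r) := ⟨⟨0, hr⟩⟩
  have hVsub : ∀ i j, j ≠ i → ¬ V j ⊆ V i := fun i j hji hsub =>
    hinc j i hji (Ideal.span_mono (Set.image_mono (Finset.coe_subset.mpr hsub)))
  have hnot : ¬ IsNAbsorbing (I ^ (m + 1)) ((m + 1) * r - 1) := by
    subst hI
    simpa using not_isNAbsorbing_iInf_pow _ (fun i => ∑ t ∈ V i, X t)
      (fun i => Ideal.sum_mem _ fun t ht => subset_span (Set.mem_image_of_mem _ ht))
      (fun i => sum_X_ne_zero (hV i)) m
      (fun i => sum_X_pow_mul_prod_notMem_span_X_pow V hV i (hVsub i) m)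
  refine ⟨hnot, ?_⟩
  have := le_omegaAbs_of_not_isNAbsorbing hnot
  rwa [Nat.sub_add_cancel (Nat.mul_pos m.succ_pos hr)] at this
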